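/- Let O be an order in a number field K, and let A, B, and O·λ be invertible ideals of O. Suppose O·λ = ∏_{i∈I} P_i^{m_i} is a factorization into invertible prime ideals P_i with all m_i ≥ 1, and suppose the classes [A] and [B] in Pic(O) satisfy [A] ≡ [B] modulo the subgroup generated by the classes [P_i], i ∈ I, where moreover [A]·[B]⁻¹ is a product of classes [P_i]^{v_i} with all v_i ≥ 0. Then there exist x ∈ (A : B), y ∈ (B : A), and k ≥ 0 with xy = u·λ^k for some unit u of O; consequently, after adjusting x by a unit, xy = λ^k. -/

import Mathlib

/-! If `[A] = [B]·∏ [P_i]^{v_i}` then `A = c·B·Q` with `Q = ∏ P_i^{v_i} ⊆ O` and `c ∈ K`. Since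
`O·λ = ∏ P_i^{m_i}` with every `m_i ≥ 1`, the power `λ^k` lies in `Q` as soon as `k ≥ v_i` for all
`i`. Then `x = c·λ^k` maps `B` into `c·B·Q = A`, while `y = c⁻¹` maps `A = c·B·Q ⊆ c·B` into `B`,
and `x·y = λ^k`. -/

noncomputable section

/-- `ℤ[λ]`, the subring of `K` generated by `λ`. -/
def orderGen {K : Type} [Field K] (lam : K) : Subring K := Subring.closure {lam}

theorem lam_mem_orderGen {K : Type} [Field K] (lam : K) : lam ∈ orderGen lam :=
  Subring.subset_closure (Set.mem_singleton lam)


/-- The fractional-ideal colon `(A : B) = {ξ ∈ K ∣ ξB ⊆ A}` as a subset of `K`. -/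
def colonSetF {K : Type} [Field K] {O : Subring K} [IsFractionRing O K]
    (A B : FractionalIdeal (nonZeroDivisors O) K) : Set K :=
  {x : K | ∀ b ∈ B, x * b ∈ A}

open FractionalIdeal nonZeroDivisors

theorem ClassGroup.exists_eq_spanSingleton_mul_mul_of_mk_eq {R K : Type*} [CommRing R] [IsDomain R]
    [Field K] [Algebra R K] [IsFractionRing R K] {I J Q : (FractionalIdeal R⁰ K)ˣ}
    (h : ClassGroup.mk K I = ClassGroup.mk K J * ClassGroup.mk K Q) :
    ∃ c : K, c ≠ 0 ∧ (I : FractionalIdeal R⁰ K) = spanSingleton R⁰ c * J * Q := by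
  have hprincipal : ((I * J⁻¹ * Q⁻¹ : (FractionalIdeal R⁰ K)ˣ) : Submodule R K).IsPrincipal := by
    rw [← ClassGroup.mk_eq_one_iff, map_mul, map_mul, map_inv, map_inv, h,
      mul_right_comm (ClassGroup.mk K J), mul_inv_cancel, one_mul, mul_inv_cancel]
  obtain ⟨c, hc⟩ := (isPrincipal_iff _).mp hprincipal
  refine ⟨c, fun hc0 => (I * J⁻¹ * Q⁻¹).ne_zero (by rw [hc, hc0, spanSingleton_zero]), ?_⟩
  rw [← hc, ← Units.val_mul, ← Units.val_mul, mul_right_comm _ _ J, inv_mul_cancel_right,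
    inv_mul_cancel_right]

theorem FractionalIdeal.spanSingleton_pow_le_prod_pow {R K ι : Type*} [CommRing R] [CommRing K]
    [Algebra R K] {S : Submonoid R} [IsLocalization S K] [Fintype ι] {a : K}
    {P : ι → FractionalIdeal S K} {m v : ι → ℕ} (hP : ∀ i, P i ≤ 1) (hm : ∀ i, 1 ≤ m i)
    (hfact : spanSingleton S a = ∏ i, P i ^ m i) {k : ℕ} (hk : ∀ i, v i ≤ k) :
    spanSingleton S (a ^ k) ≤ ∏ i, P i ^ v i := by
  rw [← spanSingleton_pow, hfact, ← Finset.prod_pow]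
  refine Finset.prod_le_prod' fun i _ => ?_
  rw [← pow_mul]
  exact pow_le_pow_right_of_le_one' (hP i) ((hk i).trans (Nat.le_mul_of_pos_left k (hm i)))

section Colon

variable {K : Type} [Field K] {O : Subring K} [IsFractionRing O K] {A B Q : FractionalIdeal O⁰ K}
  {c : K}

theorem mul_mem_colonSetF_of_eq_spanSingleton_mul_mul (hA : A = spanSingleton O⁰ c * B * Q)
    {t : K} (ht : t ∈ Q) : c * t ∈ colonSetF A B := fun b hb => by
  rw [hA, mul_right_comm c]
  exact mul_mem_mul (mul_mem_mul (mem_spanSingleton_self _ c) hb) ht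

theorem inv_mem_colonSetF_of_eq_spanSingleton_mul_mul (hA : A = spanSingleton O⁰ c * B * Q)
    (hQ : Q ≤ 1) (hc : c ≠ 0) : c⁻¹ ∈ colonSetF B A := fun a ha => by
  have hle : A ≤ spanSingleton O⁰ c * B := hA ▸ mul_le_of_le_one_right' hQ
  obtain ⟨b, hb, rfl⟩ := mem_singleton_mul.mp (hle ha)
  rwa [inv_mul_cancel_left₀ hc]

end Colon

theorem colon_elements_of_class_congruence_general {K : Type} [Field K]
    (lam : K)
    [IsFractionRing (orderGen lam) K]
    (A B : (FractionalIdeal (nonZeroDivisors (orderGen lam)) K)ˣ)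
    (r : ℕ) (P : Fin r → (FractionalIdeal (nonZeroDivisors (orderGen lam)) K)ˣ)
    (hP : ∀ i, ∃ P' : Ideal (orderGen lam), P'.IsPrime ∧
      ((P i : FractionalIdeal (nonZeroDivisors (orderGen lam)) K)) =
        (P' : FractionalIdeal (nonZeroDivisors (orderGen lam)) K))
    (m : Fin r → ℕ) (hm : ∀ i, 1 ≤ m i)
    (hfact : FractionalIdeal.spanSingleton (nonZeroDivisors (orderGen lam)) lam =
      ∏ i, ((P i : FractionalIdeal (nonZeroDivisors (orderGen lam)) K)) ^ (m i))
    (v : Fin r → ℕ)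
    (hv : ClassGroup.mk K A = ClassGroup.mk K B * ∏ i, (ClassGroup.mk K (P i)) ^ (v i)) :
    ∃ x ∈ colonSetF (A : FractionalIdeal (nonZeroDivisors (orderGen lam)) K) B,
      ∃ y ∈ colonSetF (B : FractionalIdeal (nonZeroDivisors (orderGen lam)) K) A,
        ∃ k : ℕ, ∃ u : (orderGen lam)ˣ, x * y = (u : orderGen lam) * lam ^ k ∧
          ∃ x' ∈ colonSetF (A : FractionalIdeal (nonZeroDivisors (orderGen lam)) K) B,
            x' * y = lam ^ k := by
  set Q := ∏ i, P i ^ v i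
  have hQ : (Q : FractionalIdeal (orderGen lam)⁰ K) = ∏ i, (P i : FractionalIdeal _ K) ^ v i := by
    simp [Q]
  obtain ⟨c, hc, hA⟩ := ClassGroup.exists_eq_spanSingleton_mul_mul_of_mk_eq (Q := Q)
    (by simpa [Q, map_prod] using hv)
  have hP1 : ∀ i, (P i : FractionalIdeal (orderGen lam)⁰ K) ≤ 1 := fun i => by
    obtain ⟨P', -, hP'⟩ := hP i
    exact hP' ▸ coeIdeal_le_one
  have hQ1 : (Q : FractionalIdeal (orderGen lam)⁰ K) ≤ 1 :=
    hQ ▸ Finset.prod_le_one' fun i _ => pow_le_one' (hP1 i) _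
  set k := Finset.univ.sup v
  have hlam_pow : lam ^ k ∈ (Q : FractionalIdeal (orderGen lam)⁰ K) :=
    hQ ▸ spanSingleton_pow_le_prod_pow hP1 hm hfact (fun i => Finset.le_sup (Finset.mem_univ i))
      (mem_spanSingleton_self _ _)
  have hx := mul_mem_colonSetF_of_eq_spanSingleton_mul_mul hA hlam_pow
  have hxy : c * lam ^ k * c⁻¹ = lam ^ k := by field_simp
  refine ⟨_, hx, _, inv_mem_colonSetF_of_eq_spanSingleton_mul_mul hA hQ1 hc, k, 1, ?_, _, hx, hxy⟩
  rw [hxy, Units.val_one, OneMemClass.coe_one, one_mul]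

set_option synthInstance.maxHeartbeats 1000000 in
set_option maxHeartbeats 1000000 in
/-- Theorem 1 (ii), 'if' direction.  Let `O = ℤ[λ]` be an order in the number field `K`,
let `A`, `B` and `O·λ` be invertible integral ideals of `O`, let
`O·λ = ∏ P_i^{m_i}` be a factorization into invertible prime ideals with all `m_i ≥ 1`,
and suppose `[A] = [B]·∏ [P_i]^{v_i}` in `Pic(O)` with all `v_i ≥ 0`.  Then there are
`x ∈ (A : B)`, `y ∈ (B : A)` and `k ≥ 0` with `x y = u·λ^k` for a unit `u` of `O`;
after adjusting `x` by a unit, `x y = λ^k`. -/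
theorem colon_elements_of_class_congruence {K : Type} [Field K] [NumberField K]
    (lam : K) (hlam : lam ≠ 0) (hint : IsIntegral ℤ lam)
    (hgen : Algebra.adjoin ℚ ({lam} : Set K) = ⊤)
    [IsFractionRing (orderGen lam) K]
    (A B : (FractionalIdeal (nonZeroDivisors (orderGen lam)) K)ˣ)
    (hAint : (A : FractionalIdeal (nonZeroDivisors (orderGen lam)) K) ≤ 1)
    (hBint : (B : FractionalIdeal (nonZeroDivisors (orderGen lam)) K) ≤ 1)
    (r : ℕ) (P : Fin r → (FractionalIdeal (nonZeroDivisors (orderGen lam)) K)ˣ)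
    (hP : ∀ i, ∃ P' : Ideal (orderGen lam), P'.IsPrime ∧
      ((P i : FractionalIdeal (nonZeroDivisors (orderGen lam)) K)) =
        (P' : FractionalIdeal (nonZeroDivisors (orderGen lam)) K))
    (m : Fin r → ℕ) (hm : ∀ i, 1 ≤ m i)
    (hfact : FractionalIdeal.spanSingleton (nonZeroDivisors (orderGen lam)) lam =
      ∏ i, ((P i : FractionalIdeal (nonZeroDivisors (orderGen lam)) K)) ^ (m i))
    (v : Fin r → ℕ)
    (hv : ClassGroup.mk K A = ClassGroup.mk K B * ∏ i, (ClassGroup.mk K (P i)) ^ (v i)) :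
    ∃ x ∈ colonSetF (A : FractionalIdeal (nonZeroDivisors (orderGen lam)) K) B,
      ∃ y ∈ colonSetF (B : FractionalIdeal (nonZeroDivisors (orderGen lam)) K) A,
        ∃ k : ℕ, ∃ u : (orderGen lam)ˣ, x * y = (u : orderGen lam) * lam ^ k ∧
          ∃ x' ∈ colonSetF (A : FractionalIdeal (nonZeroDivisors (orderGen lam)) K) B,
            x' * y = lam ^ k :=
  colon_elements_of_class_congruence_general lam A B r P hP m hm hfact v hv

end
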